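/- Uniqueness in the exponentially decaying class: let T > 0 and let b, b̃ : [0,T] × ℤ^{ν1} × ℤ^{ν2} → ℂ be such that for each (m,n) the maps t ↦ b(t,m,n) and t ↦ b̃(t,m,n) are continuous, and there exist constants B > 0 and κ1', κ2' > 0 with |b(t,m,n)| ≤ B·exp(−κ1'|m| − κ2'|n|) and |b̃(t,m,n)| ≤ B·exp(−κ1'|m| − κ2'|n|) for all (t,m,n) ∈ [0,T] × ℤ^{ν1} × ℤ^{ν2}. If both b and b̃ satisfy the Duhamel integral equation b(t,m,n) = Φ^t(m,n)·c(m,n) + iε ∫₀ᵗ Φ^{t−s}(m,n) · Σ_{(m1,n1)−(m2,n2)+(m3,n3)=(m,n)} b(s,m1,n1)·conj(b(s,m2,n2))·b(s,m3,n3) ds for all t ∈ [0,T] and all (m,n), then b = b̃ on [0,T] × ℤ^{ν1} × ℤ^{ν2}. -/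

import Mathlib

open MeasureTheory intervalIntegral Filter Topology

noncomputable section

/-- Lattice of Fourier modes `ℤ^{ν1} × ℤ^{ν2}`. -/
abbrev ZLat (ν1 ν2 : ℕ) := (Fin ν1 → ℤ) × (Fin ν2 → ℤ)

/-- ℓ¹-norm of a lattice vector. -/
def l1 {ν : ℕ} (m : Fin ν → ℤ) : ℝ := ∑ j, |(m j : ℝ)|

/-- Euclidean pairing of a lattice vector with a frequency vector. -/
def zdot {ν : ℕ} (m : Fin ν → ℤ) (ω : Fin ν → ℝ) : ℝ := ∑ j, (m j : ℝ) * ω j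

/-- The linear phase `Φ^t(m,n) = exp(−i(⟨m,ω⟩² + ⟨n,ω'⟩²)t)`. -/
def Phi {ν1 ν2 : ℕ} (ω : Fin ν1 → ℝ) (ω' : Fin ν2 → ℝ) (t : ℝ) (p : ZLat ν1 ν2) : ℂ :=
  Complex.exp (-Complex.I * (((zdot p.1 ω) ^ 2 + (zdot p.2 ω') ^ 2 : ℝ) : ℂ) * (t : ℂ))

/-- Triples of lattice points with prescribed alternating sum. -/
def TripleFiber (ν1 ν2 : ℕ) (p : ZLat ν1 ν2) : Type :=
  {v : ZLat ν1 ν2 × ZLat ν1 ν2 × ZLat ν1 ν2 // v.1 - v.2.1 + v.2.2 = p}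

/-- The Picard iteration for the Fourier coefficients of the 2D cubic NLS. -/
def picard {ν1 ν2 : ℕ} (ω : Fin ν1 → ℝ) (ω' : Fin ν2 → ℝ) (c : ZLat ν1 ν2 → ℂ) (ε : ℝ) :
    ℕ → ℝ → ZLat ν1 ν2 → ℂ
  | 0 => fun t p => Phi ω ω' t p * c p
  | (k + 1) => fun t p => Phi ω ω' t p * c p +
      Complex.I * (ε : ℂ) * ∫ s in (0:ℝ)..t, Phi ω ω' (t - s) p *
        ∑' v : TripleFiber ν1 ν2 p,
          picard ω ω' c ε k s v.val.1 * (starRingEnd ℂ) (picard ω ω' c ε k s v.val.2.1) *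
            picard ω ω' c ε k s v.val.2.2

/-- The time scale `T_ε`. -/
def Teps (ν1 ν2 : ℕ) (κ1 κ2 ε : ℝ) : ℝ := (4 / 27) * (κ1 / 6) ^ ν1 * (κ2 / 6) ^ ν2 * |ε|⁻¹

/-- The constant `𝒜`. -/
def Acal (ν1 ν2 : ℕ) (κ1 κ2 : ℝ) : ℝ := (3 / 2) * (6 / κ1) ^ ν1 * (6 / κ2) ^ ν2

/-- Abstract branches of the combinatorial tree. -/
inductive Branch where
  | zero : Branch
  | one : Branch
  | node : Branch → Branch → Branch → Branch
deriving DecidableEq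

/-- The counting function ℓ. -/
def ell : Branch → ℕ
  | .zero => 0
  | .one => 1
  | .node a b c => ell a + ell b + ell c + 1

/-- The denominator function 𝔇. -/
def frakD : Branch → ℕ
  | .zero => 1
  | .one => 1
  | .node a b c => (ell a + ell b + ell c + 1) * (frakD a * frakD b * frakD c)

/-- The finite branch sets `Γ^(k)`: `Γ^(1) = {0,1}`, `Γ^(k) = {0} ∪ (Γ^(k-1))³` for `k ≥ 2`. -/
def GammaSet : ℕ → Finset Branch
  | 0 => ∅
  | 1 => {Branch.zero, Branch.one}
  | (k + 2) => insert Branch.zero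
      (((GammaSet (k + 1)) ×ˢ (GammaSet (k + 1)) ×ˢ (GammaSet (k + 1))).image
        fun x => Branch.node x.1 x.2.1 x.2.2)

/-- The domain `D^{(k,γ)}` attached to a branch. -/
def Dom (ν1 ν2 : ℕ) : Branch → Type
  | .zero => ZLat ν1 ν2
  | .one => ZLat ν1 ν2 × ZLat ν1 ν2 × ZLat ν1 ν2
  | .node a b c => Dom ν1 ν2 a × Dom ν1 ν2 b × Dom ν1 ν2 c

/-- Flattening of an element of `D^{(k,γ)}` to the tuple `((𝔪_j,𝔫_j))_{1≤j≤2σ(γ)}`. -/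
def flatten {ν1 ν2 : ℕ} : (γ : Branch) → Dom ν1 ν2 γ → List (ZLat ν1 ν2)
  | .zero, p => [p]
  | .one, s => [s.1, s.2.1, s.2.2]
  | .node a b c, s => flatten a s.1 ++ flatten b s.2.1 ++ flatten c s.2.2

/-- Alternating sum of a list: `a₁ − a₂ + a₃ − ⋯`. -/
def altSum {ν1 ν2 : ℕ} : List (ZLat ν1 ν2) → ZLat ν1 ν2
  | [] => 0
  | (a :: l) => a - altSum l

/-- The summation function `λ`. -/
def lam {ν1 ν2 : ℕ} (γ : Branch) (s : Dom ν1 ν2 γ) : ZLat ν1 ν2 := altSum (flatten γ s)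

/-- The coefficient factor `ℭ^{(k,γ)}`. -/
def frakC {ν1 ν2 : ℕ} (c : ZLat ν1 ν2 → ℂ) : (γ : Branch) → Dom ν1 ν2 γ → ℂ
  | .zero, p => c p
  | .one, s => c s.1 * (starRingEnd ℂ) (c s.2.1) * c s.2.2
  | .node a b c', s =>
      frakC c a s.1 * (starRingEnd ℂ) (frakC c b s.2.1) * frakC c c' s.2.2

/-- The nested oscillatory integral factor `ℑ^{(k,γ)}`. -/
def frakI {ν1 ν2 : ℕ} (ω : Fin ν1 → ℝ) (ω' : Fin ν2 → ℝ) :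
    (γ : Branch) → ℝ → Dom ν1 ν2 γ → ℂ
  | .zero, t, p => Phi ω ω' t (lam .zero p)
  | .one, t, s => ∫ x in (0:ℝ)..t, Phi ω ω' (t - x) (lam .one s) *
      (Phi ω ω' x s.1 * (starRingEnd ℂ) (Phi ω ω' x s.2.1) * Phi ω ω' x s.2.2)
  | .node a b c, t, s => ∫ x in (0:ℝ)..t, Phi ω ω' (t - x) (lam (.node a b c) s) *
      (frakI ω ω' a x s.1 * (starRingEnd ℂ) (frakI ω ω' b x s.2.1) * frakI ω ω' c x s.2.2)

/-- The prefactor `𝔉^{(k,γ)}`. -/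
def frakF {ν1 ν2 : ℕ} (ε : ℝ) : (γ : Branch) → Dom ν1 ν2 γ → ℂ
  | .zero, _ => 1
  | .one, _ => Complex.I * (ε : ℂ)
  | .node a b c, s => Complex.I * (ε : ℂ) *
      (frakF ε a s.1 * (starRingEnd ℂ) (frakF ε b s.2.1) * frakF ε c s.2.2)

end

noncomputable section

section DuhamelAux

open MeasureTheory intervalIntegral Filter Topology

lemma l1_nonneg' {ν : ℕ} (m : Fin ν → ℤ) : 0 ≤ l1 m :=
  Finset.sum_nonneg fun _ _ => abs_nonneg _

lemma norm_Phi' {ν1 ν2 : ℕ} (ω : Fin ν1 → ℝ) (ω' : Fin ν2 → ℝ) (t : ℝ) (p : ZLat ν1 ν2) :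
    ‖Phi ω ω' t p‖ = 1 := by
  unfold Phi
  have h : -Complex.I * (((zdot p.1 ω) ^ 2 + (zdot p.2 ω') ^ 2 : ℝ) : ℂ) * (t : ℂ)
      = ((-((zdot p.1 ω ^ 2 + zdot p.2 ω' ^ 2) * t) : ℝ) : ℂ) * Complex.I := by
    push_cast; ring
  rw [h, Complex.norm_exp_ofReal_mul_I]

lemma summable_exp_int' {κ : ℝ} (hκ : 0 < κ) :
    Summable fun n : ℤ => Real.exp (-κ * |(n : ℝ)|) := by
  have hgeo : Summable fun n : ℕ => Real.exp (-κ * n) := by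
    have := Real.summable_exp_nat_mul_iff.mpr (neg_lt_zero.mpr hκ)
    simpa [mul_comm] using this
  apply Summable.of_nat_of_neg
  · simpa using hgeo
  · simpa using hgeo

lemma summable_exp_l1' {ν : ℕ} {κ : ℝ} (hκ : 0 < κ) :
    Summable fun m : Fin ν → ℤ => Real.exp (-κ * l1 m) := by
  induction ν with
  | zero => exact .of_finite
  | succ n ih =>
      have h2 : Summable fun x : ℤ × (Fin n → ℤ) =>
          Real.exp (-κ * |(x.1 : ℝ)|) * Real.exp (-κ * l1 x.2) :=
        (summable_exp_int' hκ).mul_of_nonneg ih (fun _ => (Real.exp_pos _).le)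
          (fun _ => (Real.exp_pos _).le)
      have h3 : Summable ((fun m : Fin (n+1) → ℤ => Real.exp (-κ * l1 m)) ∘
          (Fin.consEquiv (fun _ => ℤ))) := by
        refine h2.congr fun x => ?_
        show _ = Real.exp (-κ * l1 (Fin.cons x.1 x.2))
        rw [← Real.exp_add]
        congr 1
        have hl : l1 (Fin.cons x.1 x.2 : Fin (n+1) → ℤ) = |(x.1 : ℝ)| + l1 x.2 := by
          simp [l1, Fin.sum_univ_succ]
        rw [hl]; ring
      exact (Fin.consEquiv (fun _ => ℤ)).summable_iff.mp h3

/-- The weight function used for the decay estimates. -/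
def wgt {ν1 ν2 : ℕ} (κ1 κ2 : ℝ) (q : ZLat ν1 ν2) : ℝ :=
  Real.exp (-κ1 * l1 q.1 - κ2 * l1 q.2)

lemma wgt_pos {ν1 ν2 : ℕ} (κ1 κ2 : ℝ) (q : ZLat ν1 ν2) : 0 < wgt κ1 κ2 q := Real.exp_pos _

lemma wgt_le_one {ν1 ν2 : ℕ} {κ1 κ2 : ℝ} (h1 : 0 < κ1) (h2 : 0 < κ2) (q : ZLat ν1 ν2) :
    wgt κ1 κ2 q ≤ 1 := by
  apply Real.exp_le_one_iff.mpr
  have a1 := l1_nonneg' q.1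
  have a2 := l1_nonneg' q.2
  nlinarith

lemma wgt_summable {ν1 ν2 : ℕ} {κ1 κ2 : ℝ} (h1 : 0 < κ1) (h2 : 0 < κ2) :
    Summable (wgt (ν1 := ν1) (ν2 := ν2) κ1 κ2) := by
  have ha := summable_exp_l1' (ν := ν1) h1
  have hb := summable_exp_l1' (ν := ν2) h2
  refine (ha.mul_of_nonneg hb (fun _ => (Real.exp_pos _).le)
    (fun _ => (Real.exp_pos _).le)).congr fun q => ?_
  rw [wgt, ← Real.exp_add]
  congr 1
  ring

/-- First projection of a triple in the fiber: the two last coordinates. -/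
def tf1 {ν1 ν2 : ℕ} {p : ZLat ν1 ν2} (v : TripleFiber ν1 ν2 p) : ZLat ν1 ν2 × ZLat ν1 ν2 :=
  (v.val.2.1, v.val.2.2)

def tf2 {ν1 ν2 : ℕ} {p : ZLat ν1 ν2} (v : TripleFiber ν1 ν2 p) : ZLat ν1 ν2 × ZLat ν1 ν2 :=
  (v.val.1, v.val.2.2)

def tf3 {ν1 ν2 : ℕ} {p : ZLat ν1 ν2} (v : TripleFiber ν1 ν2 p) : ZLat ν1 ν2 × ZLat ν1 ν2 :=
  (v.val.1, v.val.2.1)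

lemma tf1_injective {ν1 ν2 : ℕ} (p : ZLat ν1 ν2) :
    Function.Injective (tf1 (ν1 := ν1) (ν2 := ν2) (p := p)) := by
  rintro ⟨⟨a1, a2, a3⟩, ha⟩ ⟨⟨c1, c2, c3⟩, hc⟩ h
  obtain ⟨h2, h3⟩ := Prod.mk.injEq .. ▸ h
  subst h2; subst h3
  have key : a1 - a2 + a3 = c1 - a2 + a3 := ha.trans hc.symm
  have h1 : a1 = c1 := by
    have := add_right_cancel key
    exact sub_left_inj.mp this
  subst h1; rfl

lemma tf2_injective {ν1 ν2 : ℕ} (p : ZLat ν1 ν2) :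
    Function.Injective (tf2 (ν1 := ν1) (ν2 := ν2) (p := p)) := by
  rintro ⟨⟨a1, a2, a3⟩, ha⟩ ⟨⟨c1, c2, c3⟩, hc⟩ h
  obtain ⟨h1, h3⟩ := Prod.mk.injEq .. ▸ h
  subst h1; subst h3
  have key : a1 - a2 + a3 = a1 - c2 + a3 := ha.trans hc.symm
  have h2 : a2 = c2 := by
    have := add_right_cancel key
    exact sub_right_injective this
  subst h2; rfl

lemma tf3_injective {ν1 ν2 : ℕ} (p : ZLat ν1 ν2) :
    Function.Injective (tf3 (ν1 := ν1) (ν2 := ν2) (p := p)) := by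
  rintro ⟨⟨a1, a2, a3⟩, ha⟩ ⟨⟨c1, c2, c3⟩, hc⟩ h
  obtain ⟨h1, h2⟩ := Prod.mk.injEq .. ▸ h
  subst h1; subst h2
  have key : a1 - a2 + a3 = a1 - a2 + c3 := ha.trans hc.symm
  have h3 : a3 = c3 := add_left_cancel key
  subst h3; rfl

lemma tri_norm_bound (x y z : ℂ) (bx by' bz : ℝ) (hx : ‖x‖ ≤ bx) (hy : ‖y‖ ≤ by')
    (hz : ‖z‖ ≤ bz) : ‖x * (starRingEnd ℂ) y * z‖ ≤ bx * by' * bz := by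
  have h1 : ‖x * (starRingEnd ℂ) y * z‖ = ‖x‖ * ‖y‖ * ‖z‖ := by
    have hsy : ‖(starRingEnd ℂ) y‖ = ‖y‖ := norm_star y
    rw [norm_mul, norm_mul, hsy]
  rw [h1]
  have hbx : 0 ≤ bx := le_trans (norm_nonneg x) hx
  have hby : 0 ≤ by' := le_trans (norm_nonneg y) hy
  exact mul_le_mul (mul_le_mul hx hy (norm_nonneg y) hbx) hz (norm_nonneg z)
    (mul_nonneg hbx hby)

end DuhamelAux


/-- Uniqueness of solutions of the Duhamel equation in the exponentially
decaying class. -/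
theorem duhamel_uniqueness
    (ν1 ν2 : ℕ) (hν1 : 1 ≤ ν1) (hν2 : 1 ≤ ν2)
    (ω : Fin ν1 → ℝ) (ω' : Fin ν2 → ℝ)
    (c : ZLat ν1 ν2 → ℂ) (ε : ℝ) (hε : ε ≠ 0)
    (T : ℝ) (hT : 0 < T)
    (b btilde : ℝ → ZLat ν1 ν2 → ℂ)
    (hbcont : ∀ p : ZLat ν1 ν2, ContinuousOn (fun t => b t p) (Set.Icc (0 : ℝ) T))
    (hbtcont : ∀ p : ZLat ν1 ν2, ContinuousOn (fun t => btilde t p) (Set.Icc (0 : ℝ) T))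
    (B : ℝ) (hB : 0 < B) (κ1' κ2' : ℝ) (hκ1' : 0 < κ1') (hκ2' : 0 < κ2')
    (hbd : ∀ t ∈ Set.Icc (0 : ℝ) T, ∀ p : ZLat ν1 ν2,
      ‖b t p‖ ≤ B * Real.exp (-κ1' * l1 p.1 - κ2' * l1 p.2))
    (hbtd : ∀ t ∈ Set.Icc (0 : ℝ) T, ∀ p : ZLat ν1 ν2,
      ‖btilde t p‖ ≤ B * Real.exp (-κ1' * l1 p.1 - κ2' * l1 p.2))
    (heq : ∀ t ∈ Set.Icc (0 : ℝ) T, ∀ p : ZLat ν1 ν2,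
      b t p = Phi ω ω' t p * c p + Complex.I * (ε : ℂ) *
        ∫ s in (0:ℝ)..t, Phi ω ω' (t - s) p *
          ∑' v : TripleFiber ν1 ν2 p,
            b s v.val.1 * (starRingEnd ℂ) (b s v.val.2.1) * b s v.val.2.2)
    (heqt : ∀ t ∈ Set.Icc (0 : ℝ) T, ∀ p : ZLat ν1 ν2,
      btilde t p = Phi ω ω' t p * c p + Complex.I * (ε : ℂ) *
        ∫ s in (0:ℝ)..t, Phi ω ω' (t - s) p *
          ∑' v : TripleFiber ν1 ν2 p,
            btilde s v.val.1 * (starRingEnd ℂ) (btilde s v.val.2.1) * btilde s v.val.2.2) :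
    ∀ t ∈ Set.Icc (0 : ℝ) T, ∀ p : ZLat ν1 ν2, b t p = btilde t p := by
  -- Abbreviations
  set w : ZLat ν1 ν2 → ℝ := wgt κ1' κ2' with hwdef
  have hwpos : ∀ q : ZLat ν1 ν2, 0 < w q := fun q => wgt_pos _ _ q
  have hwle1 : ∀ q : ZLat ν1 ν2, w q ≤ 1 := fun q => wgt_le_one hκ1' hκ2' q
  have hWsum : Summable w := wgt_summable hκ1' hκ2'
  set Q : ZLat ν1 ν2 × ZLat ν1 ν2 → ℝ := fun a => w a.1 * w a.2 with hQdef
  have hQnonneg : ∀ a, 0 ≤ Q a := fun a => mul_nonneg (hwpos _).le (hwpos _).le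
  have hQsum : Summable Q :=
    hWsum.mul_of_nonneg hWsum (fun q => (hwpos q).le) (fun q => (hwpos q).le)
  set S2 : ℝ := ∑' a, Q a with hS2def
  have hS2nonneg : 0 ≤ S2 := tsum_nonneg hQnonneg
  set C : ℝ := 3 * |ε| * B ^ 2 * S2 with hCdef
  have hC0 : 0 ≤ C := by positivity
  have hbd' : ∀ t ∈ Set.Icc (0 : ℝ) T, ∀ p : ZLat ν1 ν2, ‖b t p‖ ≤ B * w p := hbd
  have hbtd' : ∀ t ∈ Set.Icc (0 : ℝ) T, ∀ p : ZLat ν1 ν2, ‖btilde t p‖ ≤ B * w p := hbtd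
  -- tsum bounds over the triple fiber
  have hQtf1 : ∀ p : ZLat ν1 ν2, Summable (fun v : TripleFiber ν1 ν2 p => Q (tf1 v)) :=
    fun p => hQsum.comp_injective (tf1_injective p)
  have hQtf2 : ∀ p : ZLat ν1 ν2, Summable (fun v : TripleFiber ν1 ν2 p => Q (tf2 v)) :=
    fun p => hQsum.comp_injective (tf2_injective p)
  have hQtf3 : ∀ p : ZLat ν1 ν2, Summable (fun v : TripleFiber ν1 ν2 p => Q (tf3 v)) :=
    fun p => hQsum.comp_injective (tf3_injective p)
  have hQtf1le : ∀ p : ZLat ν1 ν2, (∑' v : TripleFiber ν1 ν2 p, Q (tf1 v)) ≤ S2 :=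
    fun p => tsum_comp_le_tsum_of_inj hQsum hQnonneg (tf1_injective p)
  have hQtf2le : ∀ p : ZLat ν1 ν2, (∑' v : TripleFiber ν1 ν2 p, Q (tf2 v)) ≤ S2 :=
    fun p => tsum_comp_le_tsum_of_inj hQsum hQnonneg (tf2_injective p)
  have hQtf3le : ∀ p : ZLat ν1 ν2, (∑' v : TripleFiber ν1 ν2 p, Q (tf3 v)) ≤ S2 :=
    fun p => tsum_comp_le_tsum_of_inj hQsum hQnonneg (tf3_injective p)
  -- generic summability of the cubic terms
  have hcubS : ∀ (f : ℝ → ZLat ν1 ν2 → ℂ),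
      (∀ s ∈ Set.Icc (0 : ℝ) T, ∀ q, ‖f s q‖ ≤ B * w q) →
      ∀ s ∈ Set.Icc (0 : ℝ) T, ∀ p : ZLat ν1 ν2,
      Summable (fun v : TripleFiber ν1 ν2 p =>
        f s v.val.1 * (starRingEnd ℂ) (f s v.val.2.1) * f s v.val.2.2) := by
    intro f hfb s hs p
    apply Summable.of_norm_bounded (g := fun v : TripleFiber ν1 ν2 p => B ^ 3 * Q (tf1 v))
      ((hQtf1 p).mul_left _)
    intro v
    have h1 : ‖f s v.val.1‖ ≤ B := by
      refine le_trans (hfb s hs _) ?_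
      nlinarith [hwle1 v.val.1, hwpos v.val.1]
    have hres := tri_norm_bound _ _ _ _ _ _ h1 (hfb s hs v.val.2.1) (hfb s hs v.val.2.2)
    refine le_trans hres (le_of_eq ?_)
    show B * (B * w v.val.2.1) * (B * w v.val.2.2) = B ^ 3 * (w v.val.2.1 * w v.val.2.2)
    ring
  -- generic continuity of the Duhamel integrand
  have hcont : ∀ (f : ℝ → ZLat ν1 ν2 → ℂ),
      (∀ q, ContinuousOn (fun s => f s q) (Set.Icc (0 : ℝ) T)) →
      (∀ s ∈ Set.Icc (0 : ℝ) T, ∀ q, ‖f s q‖ ≤ B * w q) →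
      ∀ (t : ℝ) (p : ZLat ν1 ν2), ContinuousOn (fun s => Phi ω ω' (t - s) p *
        ∑' v : TripleFiber ν1 ν2 p,
          f s v.val.1 * (starRingEnd ℂ) (f s v.val.2.1) * f s v.val.2.2)
        (Set.Icc (0 : ℝ) T) := by
    intro f hfc hfb t p
    have hPhi : Continuous fun s : ℝ => Phi ω ω' (t - s) p := by
      unfold Phi
      exact Complex.continuous_exp.comp (continuous_const.mul
        (Complex.continuous_ofReal.comp (continuous_const.sub continuous_id)))
    refine hPhi.continuousOn.mul ?_
    refine continuousOn_tsum (u := fun v : TripleFiber ν1 ν2 p => B ^ 3 * Q (tf1 v))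
      ?_ ((hQtf1 p).mul_left _) ?_
    · intro v
      have hconj : ContinuousOn (fun s => (starRingEnd ℂ) (f s v.val.2.1))
          (Set.Icc (0 : ℝ) T) := by
        exact (hfc v.val.2.1).star
      exact ((hfc v.val.1).mul hconj).mul (hfc v.val.2.2)
    · intro v s hs
      have h1 : ‖f s v.val.1‖ ≤ B := by
        refine le_trans (hfb s hs _) ?_
        nlinarith [hwle1 v.val.1, hwpos v.val.1]
      have hres := tri_norm_bound _ _ _ _ _ _ h1 (hfb s hs v.val.2.1) (hfb s hs v.val.2.2)
      refine le_trans hres (le_of_eq ?_)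
      show B * (B * w v.val.2.1) * (B * w v.val.2.2) = B ^ 3 * (w v.val.2.1 * w v.val.2.2)
      ring
  -- the main iterative bound
  have main : ∀ n : ℕ, ∀ t ∈ Set.Icc (0 : ℝ) T, ∀ p : ZLat ν1 ν2,
      ‖b t p - btilde t p‖ ≤ 2 * B * (C * t) ^ n / n.factorial := by
    intro n
    induction n with
    | zero =>
        intro t ht p
        simp only [pow_zero, Nat.factorial_zero, Nat.cast_one, mul_one, div_one]
        calc ‖b t p - btilde t p‖ ≤ ‖b t p‖ + ‖btilde t p‖ := norm_sub_le _ _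
          _ ≤ B * w p + B * w p := add_le_add (hbd' t ht p) (hbtd' t ht p)
          _ ≤ 2 * B := by nlinarith [hwle1 p, hwpos p]
    | succ n ih =>
        intro t ht p
        obtain ⟨ht0, htT⟩ := ht
        set K : ℝ := 3 * B ^ 2 * S2 * (2 * B * C ^ n / n.factorial) with hKdef
        have hK0 : 0 ≤ K := by positivity
        -- interval integrability of the two Duhamel integrands
        have hFint : IntervalIntegrable (fun s => Phi ω ω' (t - s) p *
            ∑' v : TripleFiber ν1 ν2 p,
              b s v.val.1 * (starRingEnd ℂ) (b s v.val.2.1) * b s v.val.2.2)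
            volume 0 t := by
          apply ContinuousOn.intervalIntegrable
          rw [Set.uIcc_of_le ht0]
          exact (hcont b hbcont hbd' t p).mono (Set.Icc_subset_Icc_right htT)
        have hGint : IntervalIntegrable (fun s => Phi ω ω' (t - s) p *
            ∑' v : TripleFiber ν1 ν2 p,
              btilde s v.val.1 * (starRingEnd ℂ) (btilde s v.val.2.1) * btilde s v.val.2.2)
            volume 0 t := by
          apply ContinuousOn.intervalIntegrable
          rw [Set.uIcc_of_le ht0]
          exact (hcont btilde hbtcont hbtd' t p).mono (Set.Icc_subset_Icc_right htT)
        -- rewrite the difference as a single integral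
        have hsub : b t p - btilde t p = Complex.I * (ε : ℂ) *
            ∫ s in (0:ℝ)..t, ((Phi ω ω' (t - s) p *
              ∑' v : TripleFiber ν1 ν2 p,
                b s v.val.1 * (starRingEnd ℂ) (b s v.val.2.1) * b s v.val.2.2) -
              (Phi ω ω' (t - s) p *
              ∑' v : TripleFiber ν1 ν2 p,
                btilde s v.val.1 * (starRingEnd ℂ) (btilde s v.val.2.1) * btilde s v.val.2.2)) := by
          rw [intervalIntegral.integral_sub hFint hGint,
            heq t ⟨ht0, htT⟩ p, heqt t ⟨ht0, htT⟩ p]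
          ring
        -- pointwise bound for the integrand
        have hbound : ∀ s ∈ Set.Icc (0 : ℝ) T,
            ‖(Phi ω ω' (t - s) p *
              ∑' v : TripleFiber ν1 ν2 p,
                b s v.val.1 * (starRingEnd ℂ) (b s v.val.2.1) * b s v.val.2.2) -
              (Phi ω ω' (t - s) p *
              ∑' v : TripleFiber ν1 ν2 p,
                btilde s v.val.1 * (starRingEnd ℂ) (btilde s v.val.2.1) * btilde s v.val.2.2)‖
              ≤ K * s ^ n := by
          intro s hs
          set D : ℝ := 2 * B * (C * s) ^ n / n.factorial with hDdef
          have hD0 : 0 ≤ D := by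
            have : (0:ℝ) ≤ (C * s) ^ n := pow_nonneg (mul_nonneg hC0 hs.1) n
            positivity
          have hfbS := hcubS b hbd' s hs p
          have hgbS := hcubS btilde hbtd' s hs p
          -- telescoping bound
          have htel : ∀ v : TripleFiber ν1 ν2 p,
              ‖(b s v.val.1 * (starRingEnd ℂ) (b s v.val.2.1) * b s v.val.2.2) -
                (btilde s v.val.1 * (starRingEnd ℂ) (btilde s v.val.2.1) * btilde s v.val.2.2)‖
              ≤ D * B ^ 2 * (Q (tf1 v) + (Q (tf2 v) + Q (tf3 v))) := by
            intro v
            have e : (b s v.val.1 * (starRingEnd ℂ) (b s v.val.2.1) * b s v.val.2.2) -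
                (btilde s v.val.1 * (starRingEnd ℂ) (btilde s v.val.2.1) * btilde s v.val.2.2)
                = (b s v.val.1 - btilde s v.val.1) * (starRingEnd ℂ) (b s v.val.2.1) * b s v.val.2.2
                + btilde s v.val.1 * (starRingEnd ℂ) (b s v.val.2.1 - btilde s v.val.2.1) * b s v.val.2.2
                + btilde s v.val.1 * (starRingEnd ℂ) (btilde s v.val.2.1) *
                    (b s v.val.2.2 - btilde s v.val.2.2) := by
              simp only [map_sub]
              ring
            rw [e]
            have hd1 := ih s hs v.val.1
            have hd2 := ih s hs v.val.2.1
            have hd3 := ih s hs v.val.2.2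
            have t1 := tri_norm_bound _ _ _ _ _ _ hd1 (hbd' s hs v.val.2.1) (hbd' s hs v.val.2.2)
            have t2 := tri_norm_bound _ _ _ _ _ _ (hbtd' s hs v.val.1) hd2 (hbd' s hs v.val.2.2)
            have t3 := tri_norm_bound _ _ _ _ _ _ (hbtd' s hs v.val.1) (hbtd' s hs v.val.2.1) hd3
            calc ‖_ + _ + _‖ ≤ _ := norm_add₃_le
              _ ≤ D * (B * w v.val.2.1) * (B * w v.val.2.2)
                  + (B * w v.val.1) * D * (B * w v.val.2.2)
                  + (B * w v.val.1) * (B * w v.val.2.1) * D := add_le_add (add_le_add t1 t2) t3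
              _ = D * B ^ 2 * (Q (tf1 v) + (Q (tf2 v) + Q (tf3 v))) := by
                show _ = D * B ^ 2 * (w v.val.2.1 * w v.val.2.2 +
                  (w v.val.1 * w v.val.2.2 + w v.val.1 * w v.val.2.1))
                ring
          have hhS : Summable (fun v : TripleFiber ν1 ν2 p =>
              D * B ^ 2 * (Q (tf1 v) + (Q (tf2 v) + Q (tf3 v)))) :=
            (((hQtf1 p).add ((hQtf2 p).add (hQtf3 p))).mul_left _)
          have hkey : ‖(∑' v : TripleFiber ν1 ν2 p,
                b s v.val.1 * (starRingEnd ℂ) (b s v.val.2.1) * b s v.val.2.2) -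
              (∑' v : TripleFiber ν1 ν2 p,
                btilde s v.val.1 * (starRingEnd ℂ) (btilde s v.val.2.1) * btilde s v.val.2.2)‖
              ≤ D * B ^ 2 * (3 * S2) := by
            rw [← Summable.tsum_sub hfbS hgbS]
            calc ‖∑' v : TripleFiber ν1 ν2 p, _‖
                ≤ ∑' v : TripleFiber ν1 ν2 p,
                    D * B ^ 2 * (Q (tf1 v) + (Q (tf2 v) + Q (tf3 v))) :=
                  tsum_of_norm_bounded hhS.hasSum htel
              _ = D * B ^ 2 * ∑' v : TripleFiber ν1 ν2 p,
                    (Q (tf1 v) + (Q (tf2 v) + Q (tf3 v))) := tsum_mul_left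
              _ ≤ D * B ^ 2 * (3 * S2) := by
                  refine mul_le_mul_of_nonneg_left ?_ (by positivity)
                  rw [Summable.tsum_add (hQtf1 p) ((hQtf2 p).add (hQtf3 p)),
                    Summable.tsum_add (hQtf2 p) (hQtf3 p)]
                  have := hQtf1le p; have := hQtf2le p; have := hQtf3le p
                  linarith
          calc ‖_ - _‖ = ‖Phi ω ω' (t - s) p‖ * ‖(∑' v : TripleFiber ν1 ν2 p,
                b s v.val.1 * (starRingEnd ℂ) (b s v.val.2.1) * b s v.val.2.2) -
              (∑' v : TripleFiber ν1 ν2 p,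
                btilde s v.val.1 * (starRingEnd ℂ) (btilde s v.val.2.1) * btilde s v.val.2.2)‖ := by
                rw [← norm_mul, mul_sub]
            _ = ‖(∑' v : TripleFiber ν1 ν2 p,
                b s v.val.1 * (starRingEnd ℂ) (b s v.val.2.1) * b s v.val.2.2) -
              (∑' v : TripleFiber ν1 ν2 p,
                btilde s v.val.1 * (starRingEnd ℂ) (btilde s v.val.2.1) * btilde s v.val.2.2)‖ := by
                rw [norm_Phi' ω ω' (t - s) p, one_mul]
            _ ≤ D * B ^ 2 * (3 * S2) := hkey
            _ = K * s ^ n := by rw [hDdef, hKdef]; ring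
        -- integrate the bound
        have hae : ∀ᵐ s ∂(volume.restrict (Set.uIoc (0:ℝ) t)),
            ‖((Phi ω ω' (t - s) p *
              ∑' v : TripleFiber ν1 ν2 p,
                b s v.val.1 * (starRingEnd ℂ) (b s v.val.2.1) * b s v.val.2.2) -
              (Phi ω ω' (t - s) p *
              ∑' v : TripleFiber ν1 ν2 p,
                btilde s v.val.1 * (starRingEnd ℂ) (btilde s v.val.2.1) * btilde s v.val.2.2))‖
              ≤ K * s ^ n := by
          rw [Set.uIoc_of_le ht0]
          exact (ae_restrict_iff' measurableSet_Ioc).mpr (ae_of_all _ fun s hs =>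
            hbound s ⟨hs.1.le, hs.2.trans htT⟩)
        have hKint : IntervalIntegrable (fun s : ℝ => K * s ^ n) volume 0 t :=
          (Continuous.intervalIntegrable (continuous_const.mul (continuous_pow n)) 0 t)
        have hval : (∫ s in (0:ℝ)..t, K * s ^ n) = K * (t ^ (n+1) / (n+1)) := by
          rw [intervalIntegral.integral_const_mul, integral_pow]
          norm_num
        have hfinal : ‖b t p - btilde t p‖ ≤ |ε| * (K * (t ^ (n+1) / (n+1))) := by
          rw [hsub, norm_mul]
          have hIe : ‖Complex.I * (ε : ℂ)‖ = |ε| := by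
            rw [norm_mul, Complex.norm_I, one_mul, Complex.norm_real, Real.norm_eq_abs]
          rw [hIe]
          refine mul_le_mul_of_nonneg_left ?_ (abs_nonneg ε)
          calc ‖∫ s in (0:ℝ)..t, _‖ ≤ |∫ s in (0:ℝ)..t, K * s ^ n| :=
              intervalIntegral.norm_integral_le_abs_of_norm_le hae hKint
            _ = K * (t ^ (n+1) / (n+1)) := by
              rw [hval]
              exact abs_of_nonneg (by positivity)
        refine le_trans hfinal (le_of_eq ?_)
        rw [hKdef, hCdef, Nat.factorial_succ]
        have hfne : ((n.factorial : ℝ)) ≠ 0 := Nat.cast_ne_zero.mpr n.factorial_ne_zero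
        have hn1 : ((n:ℝ) + 1) ≠ 0 := by positivity
        push_cast
        field_simp
        ring
  -- conclusion
  intro t ht p
  have hlim : Tendsto (fun n : ℕ => 2 * B * (C * t) ^ n / n.factorial) atTop (𝓝 0) := by
    have h0 := FloorSemiring.tendsto_pow_div_factorial_atTop (K := ℝ) (C * t)
    have h2 := h0.const_mul (2 * B)
    simpa [mul_div_assoc, mul_comm] using h2
  have hle : ‖b t p - btilde t p‖ ≤ 0 :=
    ge_of_tendsto hlim (Filter.Eventually.of_forall fun n => main n t ht p)
  have h0 : b t p - btilde t p = 0 := norm_le_zero_iff.mp hle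
  exact sub_eq_zero.mp h0


end
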